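/- arXiv:2202.11994 — 2 statements merged into one kernel-verified Lean document; each statement's English description precedes it below -/
import Mathlib

section
/- Let G be a directed acyclic graph on a finite vertex set V satisfying Assumption 1 (A ↦ Y). Suppose M_i ∈ M(G) ∖ {Y} fails the M-criterion, and let (M_{i_1},…,M_{i_k}) be a topological ordering of Ch(M_i,G) ∩ M(G). Then one of the following graphical configurations holds in G: (M-a) M_{i_m} and M_{i_r} are not adjacent for some m ≠ r in {1,…,k}; (M-b) there exist r ∈ {1,…,k} and B_j ∈ ({A} ∪ O(G) ∪ M(G)) ∖ {M_i} such that M_i → M_{i_r} ← B_j is in G and M_i ∉ Adj(B_j,G); (M-c) there exist r ∈ {1,…,k} and B_j ∈ ({A} ∪ O(G) ∪ M(G)) ∖ {M_i} with B_j → M_i in G and B_j ∉ Pa(M_{i_r},G) ∪ {M_{i_r}}, and a path p = ⟨B_j, …, S⟩ with S ∈ ({A,Y} ∪ O_min(G)) ∖ Pa(M_{i_r},G) that is d-connecting given Pa(M_{i_r},G) (if B_j ∈ {A,Y} ∪ O_min(G) then B_j = S and p has length 0). -/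
open scoped Classical

noncomputable section

namespace Causal

/-- A directed graph on vertex type `V`, given by its edge relation. -/
structure Digraph (V : Type) where
  Edge : V → V → Prop

namespace Digraph

variable {V : Type}

/-- A directed graph is acyclic if there is no directed cycle. -/
def Acyclic (G : Digraph V) : Prop := ∀ v, ¬ Relation.TransGen G.Edge v v

/-- `G.anc u v` : `u` is an ancestor of `v` (`u ↦ v`), i.e. `u = v` or there is a
directed path from `u` to `v`. -/
def anc (G : Digraph V) (u v : V) : Prop := Relation.ReflTransGen G.Edge u v

/-- Parents of a vertex. -/
def paSet (G : Digraph V) (v : V) : Set V := {u | G.Edge u v}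

/-- Children of a vertex. -/
def chSet (G : Digraph V) (v : V) : Set V := {u | G.Edge v u}

/-- Adjacent vertices. -/
def adjSet (G : Digraph V) (v : V) : Set V := G.paSet v ∪ G.chSet v

/-- Ancestors of a vertex (including itself). -/
def anSet (G : Digraph V) (v : V) : Set V := {u | G.anc u v}

/-- Descendants of a vertex (including itself). -/
def deSet (G : Digraph V) (v : V) : Set V := {u | G.anc v u}

/-- Parents of a set of vertices. -/
def paOf (G : Digraph V) (S : Set V) : Set V := ⋃ v ∈ S, G.paSet v

/-- Ancestors of a set of vertices. -/
def anOf (G : Digraph V) (S : Set V) : Set V := ⋃ v ∈ S, G.anSet v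

/-- Descendants of a set of vertices. -/
def deOf (G : Digraph V) (S : Set V) : Set V := ⋃ v ∈ S, G.deSet v

/-- A path in `G` : a sequence of `n+1` distinct vertices, consecutive ones joined by an
edge of `G` in either direction.  Paths in the usual sense have `1 ≤ n`; `n = 0` is the
degenerate one-vertex path. -/
structure GPath (G : Digraph V) where
  n : ℕ
  vert : ℕ → V
  inj : ∀ i j, i ≤ n → j ≤ n → vert i = vert j → i = j
  adj : ∀ i, i < n → G.Edge (vert i) (vert (i + 1)) ∨ G.Edge (vert (i + 1)) (vert i)

namespace GPath

variable {G : Digraph V}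

/-- First vertex of a path. -/
def first (p : G.GPath) : V := p.vert 0

/-- Last vertex of a path. -/
def last (p : G.GPath) : V := p.vert p.n

/-- `v` lies on the path `p`. -/
def Mem (p : G.GPath) (v : V) : Prop := ∃ i, i ≤ p.n ∧ p.vert i = v

/-- The (interior) vertex at position `i` of `p` is a collider: both incident edges on the
path point into it. -/
def IsCollider (p : G.GPath) (i : ℕ) : Prop :=
  0 < i ∧ i < p.n ∧ G.Edge (p.vert (i - 1)) (p.vert i) ∧ G.Edge (p.vert (i + 1)) (p.vert i)

/-- A path is causal if all edges point towards its last vertex. -/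
def Causal (p : G.GPath) : Prop := ∀ i, i < p.n → G.Edge (p.vert i) (p.vert (i + 1))

/-- A path is blocked by `C` if some non-collider on it lies in `C`, or some collider on it
is not an ancestor of `C`. -/
def Blocked (p : G.GPath) (C : Set V) : Prop :=
  (∃ i, 0 < i ∧ i < p.n ∧ ¬ p.IsCollider i ∧ p.vert i ∈ C) ∨
  (∃ i, p.IsCollider i ∧ p.vert i ∉ G.anOf C)

end GPath

/-- d-separation: every path between a vertex of `S \ C` and a vertex of `T \ C` is blocked
by `C`.  It holds by convention when `S \ C` or `T \ C` is empty. -/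
def dsep (G : Digraph V) (S T C : Set V) : Prop :=
  ∀ s ∈ S \ C, ∀ t ∈ T \ C, ∀ p : G.GPath,
    1 ≤ p.n → p.first = s → p.last = t → p.Blocked C

/-- `l` is a topological ordering of the vertex set `S` : it enumerates `S` without
repetitions so that no later vertex is an ancestor of an earlier one. -/
def IsTopoOrd (G : Digraph V) (S : Set V) (l : List V) : Prop :=
  l.Nodup ∧ (∀ v, v ∈ l ↔ v ∈ S) ∧ l.Pairwise fun a b => ¬ G.anc b a

/-- There is a directed path from `u` to `v` avoiding the vertex `A` (a trivial such path
when `u = v`). -/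
def AvoidReach (G : Digraph V) (A u v : V) : Prop :=
  Relation.ReflTransGen (fun a b => G.Edge a b ∧ a ≠ A ∧ b ≠ A) u v

/-- `N(G)` : non-ancestors of the outcome `Y`. -/
def Nset (G : Digraph V) (A Y : V) : Set V := {v | ¬ G.anc v Y}

/-- `I(G)` : indirect ancestors of `Y`, i.e. vertices `v ≠ A` that are ancestors of `Y`
such that every directed path from `v` to `Y` contains `A`. -/
def Iset (G : Digraph V) (A Y : V) : Set V :=
  {v | v ≠ A ∧ G.anc v Y ∧ ¬ G.AvoidReach A v Y}

/-- `W(G)` : baseline covariates. -/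
def Wset (G : Digraph V) (A Y : V) : Set V :=
  {v | ¬ G.anc A v ∧ G.anc v Y ∧ v ∉ G.Iset A Y}

/-- `M(G)` : mediators (including `Y`). -/
def Mset (G : Digraph V) (A Y : V) : Set V := {v | v ≠ A ∧ G.anc A v ∧ G.anc v Y}

/-- `O(G)` : the optimal adjustment set. -/
def Oset (G : Digraph V) (A Y : V) : Set V := G.paOf (G.Mset A Y) \ (G.Mset A Y ∪ {A})

/-- `O_min(G)` : the inclusion-minimal subset `O' ⊆ O(G)` with `A ⫫ O(G) \ O' | O'`
(realized as the intersection of all such subsets). -/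
def Omin (G : Digraph V) (A Y : V) : Set V :=
  ⋂₀ {O' | O' ⊆ G.Oset A Y ∧ G.dsep {A} (G.Oset A Y \ O') O'}

end Digraph

/-- `chainD Wj l t` : the `t`-th element of the chain `(W_{j_0} = Wj, W_{j_1}, …, W_{j_r})`
where `l = [W_{j_1}, …, W_{j_r}]`. -/
def chainD {V : Type} (Wj : V) (l : List V) (t : ℕ) : V := (Wj :: l).getD t Wj

namespace Digraph

variable {V : Type}

/-- The W-criterion for a vertex `Wj ∈ W(G) \ O(G)`. -/
def WCrit (G : Digraph V) (A Y Wj : V) : Prop :=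
  ∀ l : List V, G.IsTopoOrd (G.chSet Wj ∩ G.Wset A Y) l →
    l ≠ [] ∧
      G.dsep {Wj} (G.Oset A Y)
        (insert (chainD Wj l l.length) (G.paSet (chainD Wj l l.length)) \ {Wj}) ∧
      ∀ t, t < l.length →
        G.Edge (chainD Wj l t) (chainD Wj l (t + 1)) ∧
        G.paSet (chainD Wj l (t + 1)) ⊆ insert (chainD Wj l t) (G.paSet (chainD Wj l t)) ∧
        G.dsep (G.paSet (chainD Wj l t) \ G.paSet (chainD Wj l (t + 1))) (G.Oset A Y)
          (G.paSet (chainD Wj l (t + 1)))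

/-- The M-criterion for a vertex `Mi ∈ M(G) \ {Y}`. -/
def MCrit (G : Digraph V) (A Y Mi : V) : Prop :=
  ∀ l : List V, G.IsTopoOrd (G.chSet Mi ∩ G.Mset A Y) l →
    l ≠ [] ∧
      G.dsep {Mi} (insert A (insert Y (G.Omin A Y)))
        (insert (chainD Mi l l.length) (G.paSet (chainD Mi l l.length)) \ {Mi}) ∧
      ∀ t, t < l.length →
        G.Edge (chainD Mi l t) (chainD Mi l (t + 1)) ∧
        G.paSet (chainD Mi l (t + 1)) ⊆ insert (chainD Mi l t) (G.paSet (chainD Mi l t)) ∧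
        G.dsep (G.paSet (chainD Mi l t) \ G.paSet (chainD Mi l (t + 1)))
          (insert A (insert Y (G.Omin A Y))) (G.paSet (chainD Mi l (t + 1)))

/-- `V*(G)` : the irreducible informative vertex set. -/
def Vstar (G : Digraph V) (A Y : V) : Set V :=
  insert A (insert Y (G.Oset A Y ∪
    {w | w ∈ G.Wset A Y ∧ w ∉ G.Oset A Y ∧ ¬ G.WCrit A Y w} ∪
    {m | m ∈ G.Mset A Y ∧ m ≠ Y ∧ ¬ G.MCrit A Y m}))

/-- The projection `G_{−v,π}` : saturate all edges from `Pa(v,G) ∪ {v, π_1, …, π_{j−1}}`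
into `π_j`, then delete `v` and its incident edges. -/
def proj (G : Digraph V) (v : V) (π : List V) : Digraph V where
  Edge a b :=
    a ≠ v ∧ b ≠ v ∧
      (G.Edge a b ∨ ∃ j, j < π.length ∧ b = π.getD j v ∧
        (G.Edge a v ∨ ∃ j', j' < j ∧ a = π.getD j' v))

/-- There is a directed path from `u` to `v` all of whose non-endpoint vertices lie
in `I` (this includes a plain edge `u → v`). -/
def connVia (G : Digraph V) (I : Set V) (u v : V) : Prop :=
  ∃ w, Relation.ReflTransGen (fun a b => G.Edge a b ∧ b ∈ I) u w ∧ G.Edge w v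

/-- The reduced graph `G⁰` on `V⁰ = V \ (N(G) ∪ I(G))` : connect across `I(G)` and delete
the vertices of `N(G) ∪ I(G)`. -/
def reduce0 (G : Digraph V) (A Y : V) : Digraph V where
  Edge u v :=
    u ∉ G.Nset A Y ∪ G.Iset A Y ∧ v ∉ G.Nset A Y ∪ G.Iset A Y ∧
      G.connVia (G.Iset A Y) u v

/-- The induced subgraph on a vertex set `S`. -/
def induce (G : Digraph V) (S : Set V) : Digraph {v // v ∈ S} where
  Edge a b := G.Edge a.1 b.1

/-- `π` is the projection ordering used when projecting `v` out of the current graph `H`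
(vertex classes taken with respect to the reference graph `Gref`): for `v ∈ W(Gref)` it is a
topological ordering of the children of `v` in `H` lying in `W(Gref)`, followed by `A` if `A`
is a child of `v` in `H`; for `v ∈ M(Gref)` it is a topological ordering of all children
of `v` in `H`. -/
def PiOrd (Gref : Digraph V) (A Y : V) (H : Digraph V) (v : V) (π : List V) : Prop :=
  (v ∈ Gref.Wset A Y ∧
    ∃ l, H.IsTopoOrd (H.chSet v ∩ Gref.Wset A Y) l ∧
      π = l ++ if H.Edge v A then [A] else []) ∨
  (v ∈ Gref.Mset A Y ∧ H.IsTopoOrd (H.chSet v) π)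

/-- One step of the graph-reduction algorithm: visit `v` in the current graph `H`; if `v`
satisfies the W- (resp. M-) criterion in `G` it is projected out, otherwise nothing happens. -/
def AlgStep (G : Digraph V) (A Y : V) (H : Digraph V) (v : V) (H' : Digraph V) : Prop :=
  (v ∈ G.Wset A Y ∧ G.WCrit A Y v ∧
    ∃ l, H.IsTopoOrd (H.chSet v ∩ G.Wset A Y) l ∧
      H' = H.proj v (l ++ if H.Edge v A then [A] else [])) ∨
  (v ∈ G.Mset A Y ∧ G.MCrit A Y v ∧
    ∃ l, H.IsTopoOrd (H.chSet v) l ∧ H' = H.proj v l) ∨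
  (¬ (v ∈ G.Wset A Y ∧ G.WCrit A Y v) ∧ ¬ (v ∈ G.Mset A Y ∧ G.MCrit A Y v) ∧ H' = H)

/-- A run of the graph-reduction algorithm through the list of vertices `l`. -/
inductive AlgRun (G : Digraph V) (A Y : V) : Digraph V → List V → Digraph V → Prop
  | nil (H : Digraph V) : AlgRun G A Y H [] H
  | cons {H H' H'' : Digraph V} {v : V} {l : List V} :
      G.AlgStep A Y H v H' → AlgRun G A Y H' l H'' → AlgRun G A Y H (v :: l) H''

/-- `H` is an output of the graph-reduction algorithm applied to `G` : starting from the
reduced graph `G⁰`, visit each vertex of `V⁰ \ ({A,Y} ∪ O(G))` exactly once, in any order. -/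
def IsAlgOutput (G : Digraph V) (A Y : V) (H : Digraph V) : Prop :=
  ∃ l : List V, l.Nodup ∧
    (∀ v, v ∈ l ↔ (v ∉ G.Nset A Y ∪ G.Iset A Y ∧ v ∉ insert A (insert Y (G.Oset A Y)))) ∧
    G.AlgRun A Y (G.reduce0 A Y) l H

/-- Markov equivalence: same adjacencies and the same unshielded colliders. -/
def MarkovEquiv (G G' : Digraph V) : Prop :=
  (∀ u v, u ∈ G.adjSet v ↔ u ∈ G'.adjSet v) ∧
  ∀ u w v, (G.Edge u w ∧ G.Edge v w ∧ u ≠ v ∧ u ∉ G.adjSet v) ↔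
    (G'.Edge u w ∧ G'.Edge v w ∧ u ≠ v ∧ u ∉ G'.adjSet v)

end Digraph

/-- `p` is a shortest causal path from `v` to the set `S` (of length `0` if `v ∈ S`). -/
def IsShortestCausalTo {V : Type} (G : Digraph V) (p : G.GPath) (v : V) (S : Set V) : Prop :=
  p.Causal ∧ p.first = v ∧ p.last ∈ S ∧
    ∀ q : G.GPath, q.Causal → q.first = v → q.last ∈ S → p.n ≤ q.n

/-- Length of a shortest causal path from `v` to the set `D`. -/
def causalDist {V : Type} (G : Digraph V) (v : V) (D : Set V) : ℕ :=
  sInf {n | ∃ q : G.GPath, q.Causal ∧ q.first = v ∧ q.last ∈ D ∧ q.n = n}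

/-- The distance-to-`D` of a path: the sum over its colliders `C_h` of `|c_h| + 1`, where
`c_h` is a shortest causal path from `C_h` to `D`. -/
def Digraph.GPath.distTo {V : Type} {G : Digraph V} (p : G.GPath) (D : Set V) : ℕ :=
  ∑ i ∈ Finset.range (p.n + 1),
    if p.IsCollider i then causalDist G (p.vert i) D + 1 else 0

/-- A `Fintype` instance for subtypes of sets over a finite type. -/
noncomputable instance instFintypeMemSet {α : Type} [Finite α] (S : Set α) :
    Fintype {x // x ∈ S} := Set.Finite.fintype (Set.toFinite S)

end Causal

/-
Without (M-a) the mediator children of `M_i` are pairwise adjacent, so acyclicity makes them a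
transitive chain `M_i → M_{i_1} → ⋯ → M_{i_k}` in which every vertex points to all later ones.
If the separation (i) of the M-criterion fails, a d-connecting path from `M_i` either leaves
`M_i` through a parent `B`, which gives (M-c), or enters a mediator child `M_{i_r}` (which is an
ancestor of `Y`, hence in the conditioning set, hence a collider); its other neighbour `B` on
the path gives (M-b) or (M-c). If (ii) fails, look at the first failing step `t`. A new parent
`B` of `M_{i_{t+1}}` cannot be a child of `M_i` (it would be an earlier chain vertex, hence a
parent of `M_{i_t}`), nor a parent of `M_i`: then `B` is dropped from the parent sets at some
earlier step `s`, and the causal path `B → M_{i_{t+1}} ⇝ Y` contradicts the separation at `s`.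
So `B` gives (M-b). If instead the separation at `t` fails, its starting vertex is by (ii)(b)
a parent of `M_i` and the d-connecting path gives (M-c).
-/

theorem Nat.exists_lt_and_not_succ {P : ℕ → Prop} {n : ℕ} (h0 : P 0) (hn : ¬ P n) :
    ∃ s < n, P s ∧ ¬ P (s + 1) := by
  induction n with
  | zero => exact absurd h0 hn
  | succ n ih =>
    by_cases hP : P n
    · exact ⟨n, n.lt_succ_self, hP, hn⟩
    · obtain ⟨s, hs, h⟩ := ih hP
      exact ⟨s, by omega, h⟩

namespace Causal.Digraph

variable {V : Type} {G : Digraph V}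

lemma Acyclic.not_edge_of_anc (hG : G.Acyclic) {a b : V} (h : G.anc a b) : ¬ G.Edge b a :=
  fun e => hG a (Relation.TransGen.tail' h e)

lemma Acyclic.irrefl (hG : G.Acyclic) (a : V) : ¬ G.Edge a a :=
  hG.not_edge_of_anc Relation.ReflTransGen.refl

lemma Acyclic.asymm (hG : G.Acyclic) {a b : V} (e : G.Edge a b) : ¬ G.Edge b a :=
  hG.not_edge_of_anc (Relation.ReflTransGen.single e)

lemma mem_anOf {x : V} {C : Set V} : x ∈ G.anOf C ↔ ∃ c ∈ C, G.anc x c := by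
  simp [anOf, anSet]

lemma anOf_mono {C D : Set V} (h : C ⊆ D) : G.anOf C ⊆ G.anOf D :=
  Set.biUnion_subset_biUnion_left h

section Mediators

variable {A Y : V}

lemma mem_insert_Oset_union_Mset_of_edge {B m : V} (hm : m ∈ G.Mset A Y) (e : G.Edge B m) :
    B ∈ insert A (G.Oset A Y ∪ G.Mset A Y) := by
  by_cases hBA : B = A
  · exact Or.inl hBA
  by_cases hBM : B ∈ G.Mset A Y
  · exact Or.inr (Or.inr hBM)
  · exact Or.inr (Or.inl ⟨Set.mem_biUnion hm e, fun h => h.elim hBM hBA⟩)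

lemma anc_of_mem_Oset {v : V} (hv : v ∈ G.Oset A Y) : G.anc v Y := by
  obtain ⟨m, hm, e⟩ := Set.mem_iUnion₂.mp hv.1
  exact (Relation.ReflTransGen.single e).trans hm.2.2

/-- `O(G)` itself satisfies the defining separation (vacuously), so `O_min(G) ⊆ O(G)`. -/
lemma Omin_subset_Oset : G.Omin A Y ⊆ G.Oset A Y :=
  fun _ hx => hx _ ⟨subset_rfl, fun _ _ _ ht => absurd ht.1.1 ht.1.2⟩

lemma anc_of_mem_insert_insert_Omin (hA : G.anc A Y) {s : V}
    (hs : s ∈ insert A (insert Y (G.Omin A Y))) : G.anc s Y := by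
  rcases hs with rfl | rfl | hs
  · exact hA
  · exact Relation.ReflTransGen.refl
  · exact anc_of_mem_Oset (Omin_subset_Oset hs)

lemma mem_Mset_of_edge (hG : G.Acyclic) {m c : V} (hm : m ∈ G.Mset A Y) (e : G.Edge m c)
    (hc : G.anc c Y) : c ∈ G.Mset A Y :=
  ⟨fun h => hG.not_edge_of_anc hm.2.1 (h ▸ e), hm.2.1.tail e, hc⟩

lemma exists_mem_chSet_inter_Mset (hG : G.Acyclic) {m : V} (hm : m ∈ G.Mset A Y)
    (hmY : m ≠ Y) : ∃ c, c ∈ G.chSet m ∩ G.Mset A Y := by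
  rcases Relation.ReflTransGen.cases_head hm.2.2 with h | ⟨c, e, hc⟩
  · exact absurd h hmY
  · exact ⟨c, e, mem_Mset_of_edge hG hm e hc⟩

end Mediators

namespace GPath

set_option linter.dupNamespace false

lemma vert_ne (p : G.GPath) {i j : ℕ} (hi : i ≤ p.n) (hj : j ≤ p.n) (hij : i ≠ j) :
    p.vert i ≠ p.vert j :=
  fun h => hij (p.inj i j hi hj h)

def single (G : Digraph V) (v : V) : G.GPath where
  n := 0
  vert := fun _ => v
  inj := by omega
  adj := by omega

def drop (p : G.GPath) (a : ℕ) (ha : a ≤ p.n) : G.GPath where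
  n := p.n - a
  vert := fun i => p.vert (a + i)
  inj := fun i j hi hj h => by
    have := p.inj (a + i) (a + j) (by omega) (by omega) h
    omega
  adj := fun i hi => p.adj (a + i) (by omega)

lemma drop_last (p : G.GPath) (a : ℕ) (ha : a ≤ p.n) : (p.drop a ha).last = p.last := by
  simp only [last, drop]
  congr 1
  omega

lemma Causal.drop {p : G.GPath} (hc : p.Causal) (a : ℕ) (ha : a ≤ p.n) : (p.drop a ha).Causal :=
  fun i hi => hc (a + i) (by simp only [GPath.drop] at hi; omega)

lemma drop_isCollider_iff (p : G.GPath) {a : ℕ} (ha : a ≤ p.n) {i : ℕ} (hi : 0 < i) :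
    (p.drop a ha).IsCollider i ↔ p.IsCollider (a + i) := by
  simp only [IsCollider, drop, show a + (i - 1) = a + i - 1 by omega, Nat.add_assoc]
  constructor <;> rintro ⟨-, h, h1, h2⟩ <;> exact ⟨by omega, by omega, h1, h2⟩

lemma Blocked.of_drop {p : G.GPath} {a : ℕ} {ha : a ≤ p.n} {C : Set V}
    (h : (p.drop a ha).Blocked C) : p.Blocked C := by
  rcases h with ⟨i, hi0, hin, hnc, hC⟩ | ⟨i, hi, hC⟩
  · exact Or.inl ⟨a + i, by omega, by simp only [GPath.drop] at hin; omega,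
      fun h => hnc ((p.drop_isCollider_iff ha hi0).mpr h), hC⟩
  · exact Or.inr ⟨a + i, (p.drop_isCollider_iff ha hi.1).mp hi, hC⟩

def cons (u : V) (p : G.GPath) (e : G.Edge u p.first ∨ G.Edge p.first u)
    (hu : ∀ i, i ≤ p.n → p.vert i ≠ u) : G.GPath where
  n := p.n + 1
  vert := fun i => if i = 0 then u else p.vert (i - 1)
  inj := by
    intro i j hi hj h
    by_cases hi0 : i = 0 <;> by_cases hj0 : j = 0 <;> simp only [hi0, hj0, ↓reduceIte] at h
    · omega
    · exact absurd h.symm (hu (j - 1) (by omega))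
    · exact absurd h (hu (i - 1) (by omega))
    · have := p.inj (i - 1) (j - 1) (by omega) (by omega) h
      omega
  adj := by
    intro i hi
    rcases i with _ | i
    · simpa [first] using e
    · simpa using p.adj i (by omega)

section Cons

variable {u : V} {p : G.GPath} {e : G.Edge u p.first ∨ G.Edge p.first u}
  {hu : ∀ i, i ≤ p.n → p.vert i ≠ u}

lemma cons_vert_succ (i : ℕ) : (cons u p e hu).vert (i + 1) = p.vert i := by
  simp [cons]

lemma cons_last : (cons u p e hu).last = p.last :=
  cons_vert_succ p.n

end Cons

lemma Causal.cons {u : V} {p : G.GPath} (hc : p.Causal) (e : G.Edge u p.first)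
    (hu : ∀ i, i ≤ p.n → p.vert i ≠ u) :
    (cons u p (Or.inl e) hu).Causal := by
  rintro (_ | i) hi
  · exact e
  · rw [cons_vert_succ, cons_vert_succ]
    exact hc i (by simp only [GPath.cons] at hi; omega)

lemma Causal.anc_vert {p : G.GPath} (hc : p.Causal) {i : ℕ} (hi : i ≤ p.n) :
    G.anc p.first (p.vert i) := by
  induction i with
  | zero => exact Relation.ReflTransGen.refl
  | succ k ih => exact (ih (by omega)).tail (hc k (by omega))

lemma Causal.not_isCollider (hG : G.Acyclic) {p : G.GPath} (hc : p.Causal) (i : ℕ) :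
    ¬ p.IsCollider i :=
  fun ⟨_, hin, _, h⟩ => hG.asymm (hc i hin) h

lemma Causal.not_blocked (hG : G.Acyclic) {p : G.GPath} (hc : p.Causal) {C : Set V}
    (hC : ∀ i, 0 < i → i < p.n → p.vert i ∉ C) : ¬ p.Blocked C := by
  rintro (⟨i, hi0, hin, -, hiC⟩ | ⟨i, hi, -⟩)
  · exact hC i hi0 hin hiC
  · exact hc.not_isCollider hG i hi

section Open

variable {p : G.GPath} {C : Set V}

lemma Blocked.diff_singleton {x : V} (h : p.Blocked C)
    (hx : ∀ i, 0 < i → i < p.n → p.vert i ≠ x) : p.Blocked (C \ {x}) := by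
  rcases h with ⟨i, hi0, hin, hnc, hiC⟩ | ⟨i, hi, hiC⟩
  · exact Or.inl ⟨i, hi0, hin, hnc, hiC, hx i hi0 hin⟩
  · exact Or.inr ⟨i, hi, fun h => hiC (anOf_mono Set.sdiff_subset h)⟩

/-- A collider at `w` would be followed by a parent of `w` that is a non-collider. -/
lemma Blocked.insert_paSet (hG : G.Acyclic) {w : V} (h : p.Blocked (G.paSet w))
    (hlast : p.last ∉ G.paSet w) : p.Blocked (insert w (G.paSet w)) := by
  rcases h with ⟨i, hi0, hin, hnc, hiC⟩ | ⟨i, hi, hiC⟩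
  · exact Or.inl ⟨i, hi0, hin, hnc, Or.inr hiC⟩
  by_cases hw : p.vert i = w
  · obtain ⟨-, hin, -, e⟩ := hi
    rw [hw] at e
    have hsucc : i + 1 < p.n := lt_of_le_of_ne hin fun h => hlast (by rw [last, ← h]; exact e)
    refine Or.inl ⟨i + 1, by omega, hsucc, fun hc => hG.asymm e ?_, Or.inr e⟩
    simpa [hw] using hc.2.2.1
  · refine Or.inr ⟨i, hi, fun h => hiC ?_⟩
    obtain ⟨c, hc, hanc⟩ := mem_anOf.mp h
    rcases hc with rfl | hc
    · obtain ⟨u, hu, e⟩ := (Relation.ReflTransGen.cases_tail hanc).resolve_left (Ne.symm hw)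
      exact mem_anOf.mpr ⟨u, e, hu⟩
    · exact mem_anOf.mpr ⟨c, hc, hanc⟩

lemma not_mem_of_not_blocked (hG : G.Acyclic) (hp : ¬ p.Blocked C) (hlast : p.last ∉ C)
    {j : ℕ} (hj0 : 0 < j) (hjn : j ≤ p.n) (e : G.Edge (p.vert j) (p.vert (j - 1))) :
    p.vert j ∉ C := by
  rcases hjn.lt_or_eq with hjn | rfl
  · exact fun hC => hp (Or.inl ⟨j, hj0, hjn, fun hc => hG.asymm e hc.2.2.1, hC⟩)
  · exact hlast

/-- Following an open path forwards from an edge into `p.vert j`, one reaches either a collider,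
which is an ancestor of `C`, or the last vertex. -/
lemma anc_of_not_blocked {y : V} (hp : ¬ p.Blocked C) (hC : ∀ c ∈ C, G.anc c y)
    (hlast : G.anc p.last y) {j : ℕ} (hj0 : 0 < j) (hjn : j ≤ p.n)
    (e : G.Edge (p.vert (j - 1)) (p.vert j)) : G.anc (p.vert j) y := by
  induction hd : p.n - j generalizing j with
  | zero => obtain rfl : j = p.n := by omega
            exact hlast
  | succ d ih =>
    by_cases hcol : p.IsCollider j
    · by_cases han : p.vert j ∈ G.anOf C
      · obtain ⟨c, hc, hanc⟩ := mem_anOf.mp han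
        exact hanc.trans (hC c hc)
      · exact absurd (Or.inr ⟨j, hcol, han⟩) hp
    · have e' : G.Edge (p.vert j) (p.vert (j + 1)) :=
        (p.adj j (by omega)).resolve_right fun h => hcol ⟨hj0, by omega, e, h⟩
      exact Relation.ReflTransGen.head e' (ih (by omega) (by omega) (by simpa using e') (by omega))

end Open

end GPath

lemma exists_causal_path {u v : V} (h : G.anc u v) :
    ∃ q : G.GPath, q.Causal ∧ q.first = u ∧ q.last = v := by
  induction h using Relation.ReflTransGen.head_induction_on with
  | refl => exact ⟨GPath.single G v, fun i hi => absurd hi (Nat.not_lt_zero i), rfl, rfl⟩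
  | @head a c e _ ih =>
    obtain ⟨q, hqc, rfl, rfl⟩ := ih
    by_cases hmem : ∃ i, i ≤ q.n ∧ q.vert i = a
    · obtain ⟨i, hi, rfl⟩ := hmem
      exact ⟨q.drop i hi, hqc.drop i hi, rfl, q.drop_last i hi⟩
    · push Not at hmem
      exact ⟨GPath.cons a q (Or.inl e) hmem, hqc.cons e hmem, rfl, GPath.cons_last⟩

lemma not_dsep_of_edge_of_anc (hG : G.Acyclic) {S T C : Set V} {b x y : V} (hb : b ∈ S \ C)
    (hy : y ∈ T) (e : G.Edge b x) (hxy : G.anc x y) (hC : ∀ v, G.anc x v → v ∉ C) :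
    ¬ G.dsep S T C := by
  intro hsep
  obtain ⟨q, hqc, rfl, rfl⟩ := exists_causal_path hxy
  have hb_q : ∀ i, i ≤ q.n → q.vert i ≠ b :=
    fun i hi h => hG.not_edge_of_anc (h ▸ hqc.anc_vert hi) e
  refine (hqc.cons e hb_q).not_blocked hG (fun i hi0 hin => ?_)
    (hsep b hb q.last ⟨hy, hC _ hxy⟩ _ (by simp [GPath.cons]) rfl GPath.cons_last)
  obtain ⟨i, rfl⟩ : ∃ j, i = j + 1 := ⟨i - 1, by omega⟩
  rw [GPath.cons_vert_succ]
  exact hC _ (hqc.anc_vert (by simp only [GPath.cons] at hin; omega))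

section TopoOrd

variable {S : Set V} {l : List V}

lemma IsTopoOrd.getD_mem (hl : G.IsTopoOrd S l) (d : V) {i : ℕ} (hi : i < l.length) :
    l.getD i d ∈ S := by
  rw [List.getD_eq_getElem l d hi]
  exact (hl.2.1 _).mp (l.getElem_mem hi)

lemma IsTopoOrd.exists_getD_eq (hl : G.IsTopoOrd S l) (d : V) {v : V} (hv : v ∈ S) :
    ∃ r, r < l.length ∧ l.getD r d = v := by
  obtain ⟨i, hi, rfl⟩ := List.mem_iff_getElem.mp ((hl.2.1 v).mpr hv)
  exact ⟨i, hi, List.getD_eq_getElem l d hi⟩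

lemma IsTopoOrd.not_anc_getD (hl : G.IsTopoOrd S l) (d : V) {i j : ℕ} (hij : i < j)
    (hj : j < l.length) : ¬ G.anc (l.getD j d) (l.getD i d) := by
  rw [List.getD_eq_getElem l d (hij.trans hj), List.getD_eq_getElem l d hj]
  exact List.pairwise_iff_getElem.mp hl.2.2 i j (hij.trans hj) hj hij

lemma IsTopoOrd.edge_getD (hl : G.IsTopoOrd S l) (hS : S.Pairwise fun u v => u ∈ G.adjSet v)
    (d : V) {i j : ℕ} (hij : i < j) (hj : j < l.length) : G.Edge (l.getD i d) (l.getD j d) := by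
  have hne : l.getD i d ≠ l.getD j d := by
    rw [List.getD_eq_getElem l d (hij.trans hj), List.getD_eq_getElem l d hj]
    exact fun h => hij.ne ((hl.1.getElem_inj_iff).mp h)
  refine (hS (hl.getD_mem d (hij.trans hj)) (hl.getD_mem d hj) hne).resolve_right fun e => ?_
  exact hl.not_anc_getD d hij hj (Relation.ReflTransGen.single e)

end TopoOrd

section Chain

variable {S : Set V} {l : List V} {d : V}

lemma chainD_mem (hl : G.IsTopoOrd S l) {t : ℕ} (ht0 : 0 < t) (ht : t ≤ l.length) :
    chainD d l t ∈ S := by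
  obtain ⟨u, rfl⟩ : ∃ u, t = u + 1 := ⟨t - 1, by omega⟩
  exact hl.getD_mem d (by omega)

lemma exists_chainD_eq (hl : G.IsTopoOrd S l) {v : V} (hv : v ∈ S) :
    ∃ t, 0 < t ∧ t ≤ l.length ∧ chainD d l t = v := by
  obtain ⟨r, hr, rfl⟩ := hl.exists_getD_eq d hv
  exact ⟨r + 1, r.succ_pos, hr, rfl⟩

lemma edge_chainD (hl : G.IsTopoOrd S l) (hS : S.Pairwise fun u v => u ∈ G.adjSet v)
    (hd : S ⊆ G.chSet d) {s t : ℕ} (hst : s < t) (ht : t ≤ l.length) :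
    G.Edge (chainD d l s) (chainD d l t) := by
  obtain ⟨u, rfl⟩ : ∃ u, t = u + 1 := ⟨t - 1, by omega⟩
  rcases s with _ | s
  · exact hd (hl.getD_mem d ht)
  · exact hl.edge_getD hS d (by omega) ht

lemma not_anc_chainD (hG : G.Acyclic) (hl : G.IsTopoOrd S l) (hd : S ⊆ G.chSet d) {s t : ℕ}
    (hst : s < t) (ht : t ≤ l.length) : ¬ G.anc (chainD d l t) (chainD d l s) := by
  obtain ⟨u, rfl⟩ : ∃ u, t = u + 1 := ⟨t - 1, by omega⟩
  rcases s with _ | s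
  · exact fun h => hG.not_edge_of_anc h (hd (hl.getD_mem d ht))
  · exact hl.not_anc_getD d (by omega) ht

lemma edge_chainD_iff (hG : G.Acyclic) (hl : G.IsTopoOrd S l)
    (hS : S.Pairwise fun u v => u ∈ G.adjSet v) (hd : S ⊆ G.chSet d) {s t : ℕ}
    (hs : s ≤ l.length) (ht : t ≤ l.length) :
    G.Edge (chainD d l s) (chainD d l t) ↔ s < t := by
  refine ⟨fun e => ?_, fun hst => edge_chainD hl hS hd hst ht⟩
  rcases lt_trichotomy s t with hst | rfl | hts
  · exact hst
  · exact absurd e (hG.irrefl _)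
  · exact absurd (Relation.ReflTransGen.single e) (not_anc_chainD hG hl hd hts hs)

lemma paSet_chainD_subset {t : ℕ}
    (h : ∀ u < t, G.paSet (chainD d l (u + 1)) ⊆ insert (chainD d l u) (G.paSet (chainD d l u))) :
    G.paSet (chainD d l t) ⊆ G.paSet d ∪ {x | ∃ s < t, x = chainD d l s} := by
  induction t with
  | zero => exact Set.subset_union_left
  | succ t ih =>
    intro x hx
    rcases h t t.lt_succ_self hx with rfl | hx
    · exact Or.inr ⟨t, t.lt_succ_self, rfl⟩
    · rcases ih (fun u hu => h u (by omega)) hx with hx | ⟨s, hs, rfl⟩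
      · exact Or.inl hx
      · exact Or.inr ⟨s, by omega, rfl⟩

end Chain

section Configurations

variable {A Y Mi : V} {l : List V}

/-- Configuration (M-b) at the mediator child `v = M_{i_r}` of `Mi`. -/
def ConfigMb (G : Digraph V) (A Y Mi v : V) : Prop :=
  ∃ B, B ∈ insert A (G.Oset A Y ∪ G.Mset A Y) ∧ B ≠ Mi ∧
    G.Edge Mi v ∧ G.Edge B v ∧ Mi ∉ G.adjSet B

/-- Configuration (M-c) at the mediator child `v = M_{i_r}` of `Mi`. -/
def ConfigMc (G : Digraph V) (A Y Mi v : V) : Prop :=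
  ∃ B, B ∈ insert A (G.Oset A Y ∪ G.Mset A Y) ∧ B ≠ Mi ∧
    G.Edge B Mi ∧ B ∉ insert v (G.paSet v) ∧
    ∃ p : G.GPath, p.first = B ∧
      p.last ∈ insert A (insert Y (G.Omin A Y)) \ G.paSet v ∧ ¬ p.Blocked (G.paSet v)

lemma configMc_of_not_blocked (hG : G.Acyclic) (hMi : Mi ∈ G.Mset A Y) {w : V} {p : G.GPath}
    (hp : ¬ p.Blocked (insert w (G.paSet w) \ {Mi})) (h0 : p.first = Mi)
    (hlast : p.last ∈ insert A (insert Y (G.Omin A Y)) \ insert w (G.paSet w))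
    {a : ℕ} (ha0 : 0 < a) (ha : a ≤ p.n) (hB : G.Edge (p.vert a) Mi)
    (hBw : p.vert a ∉ insert w (G.paSet w)) : G.ConfigMc A Y Mi w := by
  have hlast_pa : (p.drop a ha).last ∉ G.paSet w := by
    rw [GPath.drop_last]
    exact fun h => hlast.2 (Or.inr h)
  refine ⟨p.vert a, mem_insert_Oset_union_Mset_of_edge hMi hB,
    fun h => hG.irrefl Mi (h ▸ hB), hB, hBw, p.drop a ha, rfl,
    ⟨by rw [GPath.drop_last]; exact hlast.1, hlast_pa⟩, fun hb => hp ?_⟩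
  refine ((hb.insert_paSet hG hlast_pa).diff_singleton fun i _ hi => ?_).of_drop
  rw [← h0]
  exact p.vert_ne (by simp only [GPath.drop] at hi; omega) (Nat.zero_le _) (by omega)

lemma exists_config_of_not_dsep (hG : G.Acyclic) (hA : G.anc A Y) (hMi : Mi ∈ G.Mset A Y)
    {w : V} (hw : w ∈ G.chSet Mi ∩ G.Mset A Y)
    (hsink : ∀ v ∈ G.chSet Mi ∩ G.Mset A Y, v ∈ insert w (G.paSet w))
    (hsep : ¬ G.dsep {Mi} (insert A (insert Y (G.Omin A Y))) (insert w (G.paSet w) \ {Mi})) :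
    ∃ v ∈ G.chSet Mi ∩ G.Mset A Y, G.ConfigMb A Y Mi v ∨ G.ConfigMc A Y Mi v := by
  simp only [dsep, not_forall, exists_prop] at hsep
  obtain ⟨s, ⟨hs, -⟩, t, ⟨htT, htC⟩, p, hn, hs0, rfl, hp⟩ := hsep
  have h0 : p.vert 0 = Mi := hs0.trans hs
  have hne0 : ∀ j, 0 < j → j ≤ p.n → p.vert j ≠ Mi :=
    fun j hj0 hjn => h0 ▸ p.vert_ne hjn (Nat.zero_le _) hj0.ne'
  have hlast : p.last ∈ insert A (insert Y (G.Omin A Y)) \ insert w (G.paSet w) :=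
    ⟨htT, fun h => htC ⟨h, hne0 p.n (by omega) le_rfl⟩⟩
  have houtside : ∀ j, 0 < j → j ≤ p.n → G.Edge (p.vert j) (p.vert (j - 1)) →
      p.vert j ∉ insert w (G.paSet w) :=
    fun j hj0 hjn e hw' => p.not_mem_of_not_blocked hG hp htC hj0 hjn e ⟨hw', hne0 j hj0 hjn⟩
  rcases p.adj 0 (by omega) with e1 | e1
  · rw [h0] at e1
    -- `M_i → v₁`: then `v₁` is a mediator child of `M_i`, conditioned on, so a collider.
    have hv1Y : G.anc (p.vert 1) Y := by
      refine p.anc_of_not_blocked hp ?_ (anc_of_mem_insert_insert_Omin hA htT) one_pos hn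
        (h0 ▸ e1)
      rintro c ⟨rfl | hc, -⟩
      · exact hw.2.2.2
      · exact (Relation.ReflTransGen.single hc).trans hw.2.2.2
    have hv1 : p.vert 1 ∈ G.chSet Mi ∩ G.Mset A Y := ⟨e1, mem_Mset_of_edge hG hMi e1 hv1Y⟩
    have hv1C : p.vert 1 ∈ insert w (G.paSet w) \ {Mi} := ⟨hsink _ hv1, hne0 1 one_pos hn⟩
    have h1n : 1 < p.n := lt_of_le_of_ne hn fun h => htC (by rw [GPath.last, ← h]; exact hv1C)
    have e2 : G.Edge (p.vert 2) (p.vert 1) := by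
      by_contra hnc
      exact hp (Or.inl ⟨1, one_pos, h1n, fun hc => hnc hc.2.2.2, hv1C⟩)
    have hv2 := houtside 2 two_pos h1n e2
    by_cases hBMi : G.Edge (p.vert 2) Mi
    · exact ⟨w, hw, Or.inr (configMc_of_not_blocked hG hMi hp h0 hlast two_pos h1n
        hBMi hv2)⟩
    by_cases hMiB : G.Edge Mi (p.vert 2)
    · refine absurd (hsink _ ⟨hMiB, mem_Mset_of_edge hG hMi hMiB ?_⟩) hv2
      exact (Relation.ReflTransGen.single e2).trans hv1Y
    · exact ⟨p.vert 1, hv1, Or.inl ⟨p.vert 2, mem_insert_Oset_union_Mset_of_edge hv1.2 e2,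
        hne0 2 two_pos h1n, e1, e2, fun h => h.elim hMiB hBMi⟩⟩
  · rw [h0] at e1
    exact ⟨w, hw, Or.inr (configMc_of_not_blocked hG hMi hp h0 hlast one_pos hn e1
      (houtside 1 one_pos hn (by rwa [h0])))⟩

lemma configMb_of_not_paSet_subset (hG : G.Acyclic) (hMi : Mi ∈ G.Mset A Y)
    (hl : G.IsTopoOrd (G.chSet Mi ∩ G.Mset A Y) l)
    (hS : (G.chSet Mi ∩ G.Mset A Y).Pairwise fun u v => u ∈ G.adjSet v)
    {t : ℕ} (ht : t < l.length)
    (hsep : ∀ u < t, G.dsep (G.paSet (chainD Mi l u) \ G.paSet (chainD Mi l (u + 1)))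
      (insert A (insert Y (G.Omin A Y))) (G.paSet (chainD Mi l (u + 1))))
    (hsub : ¬ G.paSet (chainD Mi l (t + 1)) ⊆ insert (chainD Mi l t) (G.paSet (chainD Mi l t))) :
    G.ConfigMb A Y Mi (chainD Mi l (t + 1)) := by
  have hd : G.chSet Mi ∩ G.Mset A Y ⊆ G.chSet Mi := Set.inter_subset_left
  obtain ⟨B, hBv, hB⟩ := Set.not_subset.mp hsub
  have hv := chainD_mem (d := Mi) hl t.succ_pos ht
  have hBt : B ≠ chainD Mi l t := fun h => hB (Or.inl h)
  have hBpa : B ∉ G.paSet (chainD Mi l t) := fun h => hB (Or.inr h)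
  have hBMi : B ≠ Mi := by
    rintro rfl
    rcases Nat.eq_zero_or_pos t with rfl | ht0
    · exact hBt rfl
    · exact hBpa (hd (chainD_mem hl ht0 ht.le))
  -- A parent `B` of `M_i` leaves the parent sets at some step `s < t`, but the causal path
  -- `B → M_{i_{t+1}} ⇝ Y` is open given the parents of the later vertex `M_{i_{s+1}}`.
  have hBMi_not_par : ¬ G.Edge B Mi := by
    intro e
    obtain ⟨s, hst, hs, hs'⟩ :=
      Nat.exists_lt_and_not_succ (P := fun u => B ∈ G.paSet (chainD Mi l u)) e hBpa
    exact absurd (hsep s hst) (not_dsep_of_edge_of_anc hG ⟨⟨hs, hs'⟩, hs'⟩ (Or.inr (Or.inl rfl))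
      hBv hv.2.2.2
      fun x hx hxpa => not_anc_chainD hG hl hd (by omega : s + 1 < t + 1) ht (hx.tail hxpa))
  have hMiB_not_ch : ¬ G.Edge Mi B := by
    intro e
    have hBY : G.anc B Y := (Relation.ReflTransGen.single hBv).trans hv.2.2.2
    obtain ⟨j, -, hj, rfl⟩ := exists_chainD_eq (d := Mi) hl ⟨e, mem_Mset_of_edge hG hMi e hBY⟩
    have hjt : j < t + 1 := (edge_chainD_iff hG hl hS hd hj ht).mp hBv
    rcases (Nat.lt_succ_iff.mp hjt).lt_or_eq with hjt | rfl
    · exact hBpa (edge_chainD hl hS hd hjt (by omega))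
    · exact hBt rfl
  exact ⟨B, mem_insert_Oset_union_Mset_of_edge hv.2 hBv, hBMi, hv.1, hBv,
    fun h => h.elim hMiB_not_ch hBMi_not_par⟩

lemma configMc_of_not_dsep_paSet (hG : G.Acyclic) (hMi : Mi ∈ G.Mset A Y)
    (hl : G.IsTopoOrd (G.chSet Mi ∩ G.Mset A Y) l)
    (hS : (G.chSet Mi ∩ G.Mset A Y).Pairwise fun u v => u ∈ G.adjSet v)
    {t : ℕ} (ht : t < l.length)
    (hsub : ∀ u < t,
      G.paSet (chainD Mi l (u + 1)) ⊆ insert (chainD Mi l u) (G.paSet (chainD Mi l u)))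
    (hsep : ¬ G.dsep (G.paSet (chainD Mi l t) \ G.paSet (chainD Mi l (t + 1)))
      (insert A (insert Y (G.Omin A Y))) (G.paSet (chainD Mi l (t + 1)))) :
    G.ConfigMc A Y Mi (chainD Mi l (t + 1)) := by
  have hd : G.chSet Mi ∩ G.Mset A Y ⊆ G.chSet Mi := Set.inter_subset_left
  simp only [dsep, not_forall, exists_prop] at hsep
  obtain ⟨B, ⟨⟨hBt, hBv⟩, -⟩, s, hs, p, -, rfl, rfl, hp⟩ := hsep
  have hv := chainD_mem (d := Mi) hl t.succ_pos ht
  have e : G.Edge p.first Mi := by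
    rcases paSet_chainD_subset hsub hBt with e | ⟨s, hs, hBs⟩
    · exact e
    · exact absurd (hBs ▸ edge_chainD hl hS hd (by omega : s < t + 1) ht) hBv
  refine ⟨p.first, mem_insert_Oset_union_Mset_of_edge hMi e, fun h => hG.irrefl _ (h ▸ e), e,
    ?_, p, rfl, hs, hp⟩
  rintro (h | h)
  · exact hG.asymm e (h ▸ hv.1)
  · exact hBv h

lemma exists_config_of_not_MCrit (hG : G.Acyclic) (hA : G.anc A Y) (hMi : Mi ∈ G.Mset A Y)
    (hMiY : Mi ≠ Y) (hS : (G.chSet Mi ∩ G.Mset A Y).Pairwise fun u v => u ∈ G.adjSet v)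
    (hfail : ¬ G.MCrit A Y Mi) :
    ∃ v ∈ G.chSet Mi ∩ G.Mset A Y, G.ConfigMb A Y Mi v ∨ G.ConfigMc A Y Mi v := by
  classical
  have hd : G.chSet Mi ∩ G.Mset A Y ⊆ G.chSet Mi := Set.inter_subset_left
  simp only [MCrit, not_forall, exists_prop] at hfail
  obtain ⟨l, hl, hfail⟩ := hfail
  have hlen : 0 < l.length := by
    obtain ⟨c, hc⟩ := exists_mem_chSet_inter_Mset hG hMi hMiY
    exact List.length_pos_of_mem ((hl.2.1 c).mpr hc)
  by_cases hlast : G.dsep {Mi} (insert A (insert Y (G.Omin A Y)))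
      (insert (chainD Mi l l.length) (G.paSet (chainD Mi l l.length)) \ {Mi})
  swap
  · refine exists_config_of_not_dsep hG hA hMi (chainD_mem hl hlen le_rfl) (fun v hv => ?_) hlast
    obtain ⟨j, -, hj, rfl⟩ := exists_chainD_eq (d := Mi) hl hv
    rcases hj.lt_or_eq with hj | rfl
    · exact Or.inr (edge_chainD hl hS hd hj le_rfl)
    · exact Or.inl rfl
  have hex := not_forall.mp fun h => hfail ⟨List.ne_nil_of_length_pos hlen, hlast, h⟩
  set t := Nat.find hex
  obtain ⟨ht, hfail_t⟩ := Classical.not_imp.mp (Nat.find_spec hex)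
  have hbelow := fun u (hu : u < t) => not_not.mp (Nat.find_min hex hu) (by omega)
  have hv := chainD_mem (d := Mi) hl t.succ_pos ht
  by_cases hsub : G.paSet (chainD Mi l (t + 1)) ⊆ insert (chainD Mi l t) (G.paSet (chainD Mi l t))
  · refine ⟨_, hv, Or.inr (configMc_of_not_dsep_paSet hG hMi hl hS ht
      (fun u hu => (hbelow u hu).2.1) fun hsep => hfail_t ?_)⟩
    exact ⟨edge_chainD hl hS hd t.lt_succ_self ht, hsub, hsep⟩
  · exact ⟨_, hv, Or.inl (configMb_of_not_paSet_subset hG hMi hl hS ht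
      (fun u hu => (hbelow u hu).2.2) hsub)⟩

end Configurations

end Causal.Digraph

open Causal in
theorem statement_14_general {V : Type}
    (G : Causal.Digraph V) (A Y : V) (hG : G.Acyclic) (hA : G.anc A Y)
    (Mi : V) (hMi : Mi ∈ G.Mset A Y) (hMiY : Mi ≠ Y) (hfail : ¬ G.MCrit A Y Mi)
    (l : List V) (hl : G.IsTopoOrd (G.chSet Mi ∩ G.Mset A Y) l) :
    (∃ m, m < l.length ∧ ∃ r, r < l.length ∧ m ≠ r ∧
      l.getD m Mi ∉ G.adjSet (l.getD r Mi)) ∨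
    (∃ r, r < l.length ∧ ∃ B, B ∈ insert A (G.Oset A Y ∪ G.Mset A Y) ∧ B ≠ Mi ∧
      G.Edge Mi (l.getD r Mi) ∧ G.Edge B (l.getD r Mi) ∧ Mi ∉ G.adjSet B) ∨
    (∃ r, r < l.length ∧ ∃ B, B ∈ insert A (G.Oset A Y ∪ G.Mset A Y) ∧ B ≠ Mi ∧
      G.Edge B Mi ∧ B ∉ insert (l.getD r Mi) (G.paSet (l.getD r Mi)) ∧
      ∃ p : G.GPath, p.first = B ∧
        p.last ∈ insert A (insert Y (G.Omin A Y)) \ G.paSet (l.getD r Mi) ∧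
        ¬ p.Blocked (G.paSet (l.getD r Mi))) := by
  by_cases hMa : ∃ m, m < l.length ∧ ∃ r, r < l.length ∧ m ≠ r ∧
      l.getD m Mi ∉ G.adjSet (l.getD r Mi)
  · exact Or.inl hMa
  have hS : (G.chSet Mi ∩ G.Mset A Y).Pairwise fun u v => u ∈ G.adjSet v := by
    intro u hu v hv huv
    obtain ⟨m, hm, rfl⟩ := hl.exists_getD_eq Mi hu
    obtain ⟨r, hr, rfl⟩ := hl.exists_getD_eq Mi hv
    by_contra h
    exact hMa ⟨m, hm, r, hr, fun hmr => huv (hmr ▸ rfl), h⟩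
  obtain ⟨v, hv, hconf⟩ := Digraph.exists_config_of_not_MCrit hG hA hMi hMiY hS hfail
  obtain ⟨r, hr, rfl⟩ := hl.exists_getD_eq Mi hv
  exact Or.inr (hconf.imp (fun h => ⟨r, hr, h⟩) fun h => ⟨r, hr, h⟩)

open Causal in
/-- If `M_i ∈ M(G) \ {Y}` fails the M-criterion, then one of the three
graphical configurations (M-a), (M-b), (M-c) holds in `G`. -/
theorem statement_14 {V : Type} [Fintype V]
    (G : Causal.Digraph V) (A Y : V) (hG : G.Acyclic) (hAY : A ≠ Y) (hA : G.anc A Y)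
    (Mi : V) (hMi : Mi ∈ G.Mset A Y) (hMiY : Mi ≠ Y) (hfail : ¬ G.MCrit A Y Mi)
    (l : List V) (hl : G.IsTopoOrd (G.chSet Mi ∩ G.Mset A Y) l) :
    (∃ m, m < l.length ∧ ∃ r, r < l.length ∧ m ≠ r ∧
      l.getD m Mi ∉ G.adjSet (l.getD r Mi)) ∨
    (∃ r, r < l.length ∧ ∃ B, B ∈ insert A (G.Oset A Y ∪ G.Mset A Y) ∧ B ≠ Mi ∧
      G.Edge Mi (l.getD r Mi) ∧ G.Edge B (l.getD r Mi) ∧ Mi ∉ G.adjSet B) ∨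
    (∃ r, r < l.length ∧ ∃ B, B ∈ insert A (G.Oset A Y ∪ G.Mset A Y) ∧ B ≠ Mi ∧
      G.Edge B Mi ∧ B ∉ insert (l.getD r Mi) (G.paSet (l.getD r Mi)) ∧
      ∃ p : G.GPath, p.first = B ∧
        p.last ∈ insert A (insert Y (G.Omin A Y)) \ G.paSet (l.getD r Mi) ∧
        ¬ p.Blocked (G.paSet (l.getD r Mi))) :=
  statement_14_general G A Y hG hA Mi hMi hMiY hfail l hl
end
end

section
/- Let G be a directed acyclic graph on a finite vertex set V containing the treatment A, in the discrete setting, and let P be a distribution on ∏_{v∈V} X_v that is Markov to G. Let a ∈ X_A and ε > 0, and suppose P(X_A = a | X_{Pa(A,G)} = x) > ε for every parent configuration x with P(X_{Pa(A,G)} = x) > 0. Then for every set L ⊆ V of vertices that are not descendants of A in G and every configuration l with P(X_L = l) > 0, P(X_A = a | X_L = l) > ε. -/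
open scoped Classical

noncomputable section

namespace Causal

/-- The configuration space for state spaces `X v ⊆ ℝ`. -/
abbrev Config {V : Type} (X : V → Finset ℝ) : Type := ∀ v, {r : ℝ // r ∈ X v}

variable {V : Type} [Fintype V] [DecidableEq V]

/-- `P` is a probability mass function on configurations. -/
def IsPMF (X : V → Finset ℝ) (P : Config X → ℝ) : Prop :=
  (∀ x, 0 ≤ P x) ∧ ∑ x : Config X, P x = 1

/-- `P` is strictly positive. -/
def StrictPos (X : V → Finset ℝ) (P : Config X → ℝ) : Prop := ∀ x, 0 < P x

/-- The marginal probability `P(X_S = x_S)`. -/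
def margOn (X : V → Finset ℝ) (P : Config X → ℝ) (S : Set V) (x : Config X) : ℝ :=
  ∑ y : Config X, if ∀ v ∈ S, y v = x v then P y else 0

/-- The conditional probability `p(x_v | x_{Pa(v,G)})` (with the `0/0 = 0` convention). -/
def condK (G : Digraph V) (X : V → Finset ℝ) (P : Config X → ℝ) (v : V) (x : Config X) : ℝ :=
  margOn X P (insert v (G.paSet v)) x / margOn X P (G.paSet v) x

/-- `P` is Markov to `G` : its pmf factorizes as `p(x) = ∏ᵥ p(x_v | x_{Pa(v,G)})`. -/
def MarkovPMF (G : Digraph V) (X : V → Finset ℝ) (P : Config X → ℝ) : Prop :=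
  ∀ x, P x = ∏ v : V, condK G X P v x

/-- The g-formula `Ψ_a(P; G) = Σ_{x : x_A = a} x_Y ∏_{v ≠ A} p(x_v | x_{Pa(v,G)})`. -/
def gFormula (G : Digraph V) (X : V → Finset ℝ) (P : Config X → ℝ) (A Y : V) (a : ℝ) : ℝ :=
  ∑ x : Config X, if (x A : ℝ) = a then
      (x Y : ℝ) * ∏ v ∈ Finset.univ.erase A, condK G X P v x
    else 0

/-- The marginal pmf on the `S`-coordinates. -/
def margPMF (X : V → Finset ℝ) (P : Config X → ℝ) (S : Set V) :
    Config (fun v : {u // u ∈ S} => X v.1) → ℝ :=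
  fun z => ∑ x : Config X, if ∀ v : {u // u ∈ S}, x v.1 = z v then P x else 0

/-- The conditional expectation `E[g | X_S](x)` under `P`. -/
def condExp (X : V → Finset ℝ) (P g : Config X → ℝ) (S : Set V) (x : Config X) : ℝ :=
  (∑ y : Config X, if ∀ v ∈ S, y v = x v then g y * P y else 0) / margOn X P S x

/-- The conditional probability `P(X_A = a | X_S = x_S)`. -/
def condProbEvent (X : V → Finset ℝ) (P : Config X → ℝ) (A : V) (a : ℝ) (S : Set V)
    (x : Config X) : ℝ :=
  (∑ y : Config X, if ((y A : ℝ) = a ∧ ∀ v ∈ S, y v = x v) then P y else 0) / margOn X P S x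

end Causal

namespace Causal

open Finset

variable {V : Type} [Fintype V] [DecidableEq V]

section Aux

variable (G : Digraph V) (X : V → Finset ℝ) (P : Config X → ℝ)

lemma aux_margOn_nonneg (h0 : ∀ x, 0 ≤ P x) (S : Set V) (x : Config X) :
    0 ≤ margOn X P S x := by
  refine Finset.sum_nonneg fun y _ => ?_
  split
  · exact h0 y
  · exact le_rfl

lemma aux_margOn_mono (h0 : ∀ x, 0 ≤ P x) {S S' : Set V} (h : S ⊆ S') (x : Config X) :
    margOn X P S' x ≤ margOn X P S x := by
  refine Finset.sum_le_sum fun y _ => ?_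
  by_cases hc : ∀ v ∈ S', y v = x v
  · rw [if_pos hc, if_pos fun v hv => hc v (h hv)]
  · rw [if_neg hc]
    split
    · exact h0 y
    · exact le_rfl

lemma aux_margOn_congr {S : Set V} {x x' : Config X} (h : ∀ v ∈ S, x v = x' v) :
    margOn X P S x = margOn X P S x' := by
  refine Finset.sum_congr rfl fun y _ => ?_
  refine if_congr ?_ rfl rfl
  exact forall₂_congr fun v hv => by rw [h v hv]

lemma aux_condK_nonneg (h0 : ∀ x, 0 ≤ P x) (v : V) (x : Config X) :
    0 ≤ condK G X P v x :=
  div_nonneg (aux_margOn_nonneg X P h0 _ _) (aux_margOn_nonneg X P h0 _ _)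

lemma aux_condK_congr {v : V} {x x' : Config X} (hv : x v = x' v)
    (hpa : ∀ u ∈ G.paSet v, x u = x' u) : condK G X P v x = condK G X P v x' := by
  unfold condK
  rw [aux_margOn_congr X P hpa, aux_margOn_congr X P (S := insert v (G.paSet v))
    (fun u hu => by rcases Set.mem_insert_iff.mp hu with rfl | hu; exacts [hv, hpa u hu])]

lemma aux_notMem_pa_self (hG : G.Acyclic) (v : V) : v ∉ G.paSet v :=
  fun h => hG v (Relation.TransGen.single h)

/-- Fiber decomposition of a sum over configurations along coordinate `w`. -/
lemma aux_sum_fiber (w : V) (c : {r : ℝ // r ∈ X w}) (φ : Config X → ℝ) :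
    ∑ z : Config X, φ z =
      ∑ z : Config X, if z w = c then
        (∑ b : {r : ℝ // r ∈ X w}, φ (Function.update z w b)) else 0 := by
  have key : ∀ b : {r : ℝ // r ∈ X w},
      (∑ z : Config X, if z w = c then φ (Function.update z w b) else 0) =
      ∑ z : Config X, if z w = b then φ z else 0 := by
    intro b
    have hinv : Function.Involutive
        (fun z : Config X => Function.update z w (Equiv.swap c b (z w))) := by
      intro z
      simp only [Function.update_self, Function.update_idem, Equiv.swap_apply_self]
      exact Function.update_eq_self w z
    refine (Fintype.sum_bijective _ hinv.bijective _ _ fun z => ?_).symm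
    simp only [Function.update_self]
    by_cases hz : z w = b
    · rw [if_pos hz, if_pos (by rw [hz, Equiv.swap_apply_right]), hz, Equiv.swap_apply_right,
        Function.update_idem]
      rw [show Function.update z w b = z from hz ▸ Function.update_eq_self w z]
    · rw [if_neg hz, if_neg (fun hh => hz (by simpa using congrArg (Equiv.swap c b) hh))]
  calc ∑ z : Config X, φ z
      = ∑ z : Config X, ∑ b : {r : ℝ // r ∈ X w}, if z w = b then φ z else 0 := by
        refine Finset.sum_congr rfl fun z _ => ?_
        rw [Finset.sum_ite_eq Finset.univ (z w) (fun _ => φ z), if_pos (Finset.mem_univ _)]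
    _ = ∑ b : {r : ℝ // r ∈ X w}, ∑ z : Config X, if z w = b then φ z else 0 := Finset.sum_comm
    _ = ∑ b : {r : ℝ // r ∈ X w}, ∑ z : Config X, if z w = c then φ (Function.update z w b) else 0 := by
        refine Finset.sum_congr rfl fun b _ => (key b).symm
    _ = ∑ z : Config X, ∑ b : {r : ℝ // r ∈ X w}, if z w = c then φ (Function.update z w b) else 0 :=
        Finset.sum_comm
    _ = _ := by
        refine Finset.sum_congr rfl fun z _ => ?_
        by_cases hz : z w = c <;> simp [hz]

lemma aux_margOn_split (w : V) (S : Set V) (hw : w ∉ S) (x : Config X) :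
    (∑ b : {r : ℝ // r ∈ X w}, margOn X P (insert w S) (Function.update x w b)) =
      margOn X P S x := by
  unfold margOn
  rw [Finset.sum_comm]
  refine Finset.sum_congr rfl fun y _ => ?_
  have hcond : ∀ b : {r : ℝ // r ∈ X w},
      (∀ v ∈ insert w S, y v = Function.update x w b v) ↔ (y w = b ∧ ∀ v ∈ S, y v = x v) := by
    intro b
    constructor
    · intro h
      refine ⟨by simpa using h w (Set.mem_insert _ _), fun v hv => ?_⟩
      have := h v (Set.mem_insert_of_mem _ hv)
      rwa [Function.update_of_ne (fun hvw : v = w => hw (hvw ▸ hv))] at this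
    · rintro ⟨h1, h2⟩ v hv
      rcases Set.mem_insert_iff.mp hv with rfl | hv
      · simpa using h1
      · rw [Function.update_of_ne (fun hvw : v = w => hw (hvw ▸ hv))]
        exact h2 v hv
  by_cases hC : ∀ v ∈ S, y v = x v
  · rw [if_pos hC]
    have hsum : (∑ b : {r : ℝ // r ∈ X w}, if y w = b then P y else 0) = P y := by
      rw [Finset.sum_ite_eq, if_pos (Finset.mem_univ _)]
    refine Eq.trans (Finset.sum_congr rfl fun b _ => ?_) hsum
    by_cases hb : ∀ v ∈ insert w S, y v = Function.update x w b v
    · rw [if_pos hb, if_pos ((hcond b).mp hb).1]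
    · rw [if_neg hb, if_neg fun hc => hb ((hcond b).mpr ⟨hc, hC⟩)]
  · rw [if_neg hC]
    refine Finset.sum_eq_zero fun b _ => if_neg fun hb => hC ((hcond b).mp hb).2

lemma aux_sum_condK (hG : G.Acyclic) (h0 : ∀ x, 0 ≤ P x) (v : V) (x : Config X) :
    (∑ b : {r : ℝ // r ∈ X v}, condK G X P v (Function.update x v b)) =
      if 0 < margOn X P (G.paSet v) x then 1 else 0 := by
  have hpa : v ∉ G.paSet v := aux_notMem_pa_self G hG v
  have hden : ∀ b : {r : ℝ // r ∈ X v},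
      margOn X P (G.paSet v) (Function.update x v b) = margOn X P (G.paSet v) x :=
    fun b => aux_margOn_congr X P fun u hu =>
      Function.update_of_ne (by rintro rfl; exact hpa hu) _ _
  calc (∑ b : {r : ℝ // r ∈ X v}, condK G X P v (Function.update x v b))
      = ∑ b : {r : ℝ // r ∈ X v},
          margOn X P (insert v (G.paSet v)) (Function.update x v b) / margOn X P (G.paSet v) x := by
        refine Finset.sum_congr rfl fun b _ => ?_
        unfold condK
        rw [hden b]
    _ = margOn X P (G.paSet v) x / margOn X P (G.paSet v) x := by
        rw [← Finset.sum_div, aux_margOn_split X P v (G.paSet v) hpa x]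
    _ = if 0 < margOn X P (G.paSet v) x then 1 else 0 := by
        split
        · exact div_self (ne_of_gt ‹_›)
        · rw [le_antisymm (not_lt.mp ‹_›) (aux_margOn_nonneg X P h0 _ _), div_zero]

/-- The pinned sum of products of kernels over any vertex set is at most one. -/
lemma aux_phi_le_one (hG : G.Acyclic) (h0 : ∀ x, 0 ≤ P x) :
    ∀ (n : ℕ) (U : Finset V), U.card = n → ∀ r : Config X,
      (∑ z : Config X, if ∀ v, v ∉ U → z v = r v then ∏ v ∈ U, condK G X P v z else 0) ≤ 1 := by
  intro n
  induction n with
  | zero =>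
    intro U hU r
    rw [Finset.card_eq_zero.mp hU]
    have hterm : ∀ z : Config X,
        (if ∀ v, v ∉ (∅ : Finset V) → z v = r v then ∏ v ∈ (∅ : Finset V), condK G X P v z else 0)
          = if z = r then 1 else 0 := by
      intro z
      simp only [Finset.notMem_empty, not_false_iff, forall_true_left, Finset.prod_empty]
      exact if_congr ⟨fun h => funext h, fun h v => congrFun h v⟩ rfl rfl
    rw [Finset.sum_congr rfl fun z _ => hterm z]
    rw [Finset.sum_ite_eq' Finset.univ r (fun _ => (1 : ℝ)), if_pos (Finset.mem_univ _)]
  | succ n ih =>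
    intro U hU r
    have hne : U.Nonempty := Finset.card_pos.mp (by omega)
    obtain ⟨w, hwU, hmax⟩ : ∃ w ∈ U, ∀ u ∈ U, ¬ Relation.TransGen G.Edge w u := by
      haveI : IsTrans V (fun a b => Relation.TransGen G.Edge b a) :=
        ⟨fun a b c hab hbc => Relation.TransGen.trans hbc hab⟩
      haveI : IsIrrefl V (fun a b => Relation.TransGen G.Edge b a) := ⟨fun a => hG a⟩
      have wf := Finite.wellFounded_of_trans_of_irrefl (fun a b : V => Relation.TransGen G.Edge b a)
      obtain ⟨w, hw, hmin⟩ := wf.has_min (↑U : Set V) (Finset.coe_nonempty.mpr hne)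
      exact ⟨w, by exact_mod_cast hw, fun u hu hedge => hmin u (by exact_mod_cast hu) hedge⟩
    have hwpa : ∀ u ∈ U.erase w, w ∉ G.paSet u := fun u hu hw' =>
      hmax u (Finset.mem_of_mem_erase hu) (Relation.TransGen.single hw')
    rw [aux_sum_fiber X w (r w)
      (fun z => if ∀ v, v ∉ U → z v = r v then ∏ v ∈ U, condK G X P v z else 0)]
    have hb : ∀ z : Config X,
        (if z w = r w then
          (∑ b : {t : ℝ // t ∈ X w}, if ∀ v, v ∉ U → Function.update z w b v = r v then
            ∏ v ∈ U, condK G X P v (Function.update z w b) else 0) else 0)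
        ≤ (if ∀ v, v ∉ U.erase w → z v = r v then ∏ v ∈ U.erase w, condK G X P v z else 0) := by
      intro z
      have hprodnn : (0 : ℝ) ≤ ∏ v ∈ U.erase w, condK G X P v z :=
        Finset.prod_nonneg fun u _ => aux_condK_nonneg G X P h0 u z
      have hRnn : (0 : ℝ) ≤
          (if ∀ v, v ∉ U.erase w → z v = r v then ∏ v ∈ U.erase w, condK G X P v z else 0) := by
        split
        · exact hprodnn
        · exact le_rfl
      by_cases hzw : z w = r w
      · rw [if_pos hzw]
        by_cases hpin : ∀ v, v ∉ U → z v = r v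
        · have hpin' : ∀ b : {t : ℝ // t ∈ X w}, (∀ v, v ∉ U → Function.update z w b v = r v) := by
            intro b v hv
            rw [Function.update_of_ne (by rintro rfl; exact hv hwU)]
            exact hpin v hv
          have hprod : ∀ b : {t : ℝ // t ∈ X w},
              (∏ v ∈ U, condK G X P v (Function.update z w b)) =
                condK G X P w (Function.update z w b) * ∏ v ∈ U.erase w, condK G X P v z := by
            intro b
            rw [← Finset.mul_prod_erase U _ hwU]
            congr 1
            refine Finset.prod_congr rfl fun u hu => ?_
            refine aux_condK_congr G X P
              (Function.update_of_ne (Finset.ne_of_mem_erase hu) _ _) fun p hp => ?_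
            exact Function.update_of_ne (by rintro rfl; exact hwpa u hu hp) _ _
          calc (∑ b : {t : ℝ // t ∈ X w}, if ∀ v, v ∉ U → Function.update z w b v = r v then
                  ∏ v ∈ U, condK G X P v (Function.update z w b) else 0)
              = (∑ b : {t : ℝ // t ∈ X w}, condK G X P w (Function.update z w b)) *
                  ∏ v ∈ U.erase w, condK G X P v z := by
                rw [Finset.sum_mul]
                exact Finset.sum_congr rfl fun b _ => by rw [if_pos (hpin' b), hprod b]
            _ ≤ 1 * ∏ v ∈ U.erase w, condK G X P v z := by
                refine mul_le_mul_of_nonneg_right ?_ hprodnn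
                rw [aux_sum_condK G X P hG h0 w z]
                split <;> norm_num
            _ = ∏ v ∈ U.erase w, condK G X P v z := one_mul _
            _ = (if ∀ v, v ∉ U.erase w → z v = r v then ∏ v ∈ U.erase w, condK G X P v z else 0) := by
                rw [if_pos]
                intro v hv
                by_cases hvw : v = w
                · subst hvw; exact hzw
                · exact hpin v fun hvU => hv (Finset.mem_erase.mpr ⟨hvw, hvU⟩)
        · have : ∀ b : {t : ℝ // t ∈ X w},
              ¬ (∀ v, v ∉ U → Function.update z w b v = r v) := by
            intro b hc
            refine hpin fun v hv => ?_
            have := hc v hv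
            rwa [Function.update_of_ne (by rintro rfl; exact hv hwU)] at this
          rw [Finset.sum_congr rfl fun b _ => if_neg (this b)]
          simpa using hRnn
      · rw [if_neg hzw]
        exact hRnn
    calc (∑ z : Config X, if z w = r w then
            (∑ b : {t : ℝ // t ∈ X w}, if ∀ v, v ∉ U → Function.update z w b v = r v then
              ∏ v ∈ U, condK G X P v (Function.update z w b) else 0) else 0)
        ≤ ∑ z : Config X,
            (if ∀ v, v ∉ U.erase w → z v = r v then ∏ v ∈ U.erase w, condK G X P v z else 0) :=
          Finset.sum_le_sum fun z _ => hb z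
      _ ≤ 1 := ih (U.erase w) (by rw [Finset.card_erase_of_mem hwU, hU]; omega) r

/-- The pinned sum of marginals equals one. -/
lemma aux_psi_eq_one (h1 : ∑ x : Config X, P x = 1) (S : Set V) (r : Config X) :
    (∑ z : Config X, if ∀ v, v ∉ S → z v = r v then margOn X P S z else 0) = 1 := by
  have hpush : ∀ z : Config X,
      (if ∀ v, v ∉ S → z v = r v then margOn X P S z else 0)
        = ∑ y : Config X, if (∀ v, v ∉ S → z v = r v) ∧ ∀ v ∈ S, y v = z v then P y else 0 := by
    intro z
    unfold margOn
    by_cases h : ∀ v, v ∉ S → z v = r v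
    · rw [if_pos h]
      exact Finset.sum_congr rfl fun y _ => (if_congr (and_iff_right h).symm rfl rfl)
    · rw [if_neg h]
      exact (Finset.sum_eq_zero fun y _ => if_neg fun hc => h hc.1).symm
  rw [Finset.sum_congr rfl fun z _ => hpush z, Finset.sum_comm]
  rw [← h1]
  refine Finset.sum_congr rfl fun y _ => ?_
  set z0 : Config X := fun v => if v ∈ S then y v else r v with hz0
  rw [Finset.sum_eq_single_of_mem z0 (Finset.mem_univ z0)]
  · have hc : (∀ v, v ∉ S → z0 v = r v) ∧ ∀ v ∈ S, y v = z0 v :=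
      ⟨fun v hv => by simp [hz0, hv], fun v hv => by simp [hz0, hv]⟩
    rw [if_pos hc]
  · rintro z - hz
    rw [if_neg]
    rintro ⟨hp, ha⟩
    refine hz (funext fun v => ?_)
    by_cases hv : v ∈ S
    · rw [← ha v hv]; simp [hz0, hv]
    · rw [hp v hv]; simp [hz0, hv]

/-- Grouping a sum over an event depending only on `S`-coordinates. -/
lemma aux_sum_event (S : Set V) (Q : Config X → Prop)
    (hQ : ∀ y z : Config X, (∀ v ∈ S, y v = z v) → (Q y ↔ Q z)) (r : Config X) :
    (∑ y : Config X, if Q y then P y else 0) =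
      ∑ z : Config X, if (∀ v, v ∉ S → z v = r v) ∧ Q z then margOn X P S z else 0 := by
  have hpush : ∀ z : Config X,
      (if (∀ v, v ∉ S → z v = r v) ∧ Q z then margOn X P S z else 0)
        = ∑ y : Config X,
            if ((∀ v, v ∉ S → z v = r v) ∧ Q z) ∧ ∀ v ∈ S, y v = z v then P y else 0 := by
    intro z
    unfold margOn
    by_cases h : (∀ v, v ∉ S → z v = r v) ∧ Q z
    · rw [if_pos h]
      exact Finset.sum_congr rfl fun y _ => (if_congr (and_iff_right h).symm rfl rfl)
    · rw [if_neg h]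
      exact (Finset.sum_eq_zero fun y _ => if_neg fun hc => h hc.1).symm
  rw [Finset.sum_congr rfl fun z _ => hpush z, Finset.sum_comm]
  refine Finset.sum_congr rfl fun y _ => ?_
  set z0 : Config X := fun v => if v ∈ S then y v else r v with hz0
  have hagree : ∀ v ∈ S, y v = z0 v := fun v hv => by simp [hz0, hv]
  rw [Finset.sum_eq_single_of_mem z0 (Finset.mem_univ z0)]
  · by_cases hq : Q y
    · have hc : ((∀ v, v ∉ S → z0 v = r v) ∧ Q z0) ∧ ∀ v ∈ S, y v = z0 v :=
        ⟨⟨fun v hv => by simp [hz0, hv], (hQ y z0 hagree).mp hq⟩, hagree⟩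
      rw [if_pos hq, if_pos hc]
    · have hc : ¬ (((∀ v, v ∉ S → z0 v = r v) ∧ Q z0) ∧ ∀ v ∈ S, y v = z0 v) :=
        fun h => hq ((hQ y z0 hagree).mpr h.1.2)
      rw [if_neg hq, if_neg hc]
  · rintro z - hz
    rw [if_neg]
    rintro ⟨⟨hp, -⟩, ha⟩
    refine hz (funext fun v => ?_)
    by_cases hv : v ∈ S
    · rw [← ha v hv]; simp [hz0, hv]
    · rw [hp v hv]; simp [hz0, hv]

lemma aux_margOn_le_prod (hG : G.Acyclic) (h0 : ∀ x, 0 ≤ P x) (hM : MarkovPMF G X P)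
    (T : Set V) (hT : ∀ v ∈ T, G.paSet v ⊆ T) (z : Config X) :
    margOn X P T z ≤ ∏ v ∈ Finset.univ.filter (· ∈ T), condK G X P v z := by
  have hprodnn : (0:ℝ) ≤ ∏ v ∈ Finset.univ.filter (· ∈ T), condK G X P v z :=
    Finset.prod_nonneg fun u _ => aux_condK_nonneg G X P h0 u z
  have hsplit : ∀ y : Config X, (∀ v ∈ T, y v = z v) →
      P y = (∏ v ∈ Finset.univ.filter (· ∈ T), condK G X P v z) *
            ∏ v ∈ Finset.univ.filter (fun x => ¬ x ∈ T), condK G X P v y := by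
    intro y hy
    rw [hM y, ← Finset.prod_filter_mul_prod_filter_not Finset.univ (· ∈ T)]
    congr 1
    refine Finset.prod_congr rfl fun u hu => ?_
    have huT : u ∈ T := (Finset.mem_filter.mp hu).2
    exact aux_condK_congr G X P (hy u huT) fun p hp => hy p (hT u huT hp)
  have hU : ∀ v : V, v ∉ Finset.univ.filter (fun x => ¬ x ∈ T) ↔ v ∈ T := by
    intro v; simp
  calc margOn X P T z
      = (∏ v ∈ Finset.univ.filter (· ∈ T), condK G X P v z) *
          ∑ y : Config X, if ∀ v, v ∉ Finset.univ.filter (fun x => ¬ x ∈ T) → y v = z v then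
            ∏ v ∈ Finset.univ.filter (fun x => ¬ x ∈ T), condK G X P v y else 0 := by
        unfold margOn
        rw [Finset.mul_sum]
        refine Finset.sum_congr rfl fun y _ => ?_
        by_cases hy : ∀ v ∈ T, y v = z v
        · rw [if_pos hy, if_pos fun v hv => hy v ((hU v).mp hv), hsplit y hy]
        · rw [if_neg hy, if_neg fun h => hy fun v hv => h v ((hU v).mpr hv), mul_zero]
    _ ≤ (∏ v ∈ Finset.univ.filter (· ∈ T), condK G X P v z) * 1 := by
        refine mul_le_mul_of_nonneg_left ?_ hprodnn
        exact aux_phi_le_one G X P hG h0 _ _ rfl z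
    _ = _ := mul_one _

/-- Marginals over ancestral sets factorize. -/
lemma aux_margOn_eq_prod (hG : G.Acyclic) (h0 : ∀ x, 0 ≤ P x) (h1 : ∑ x : Config X, P x = 1)
    (hM : MarkovPMF G X P) (T : Set V) (hT : ∀ v ∈ T, G.paSet v ⊆ T) (x : Config X) :
    margOn X P T x = ∏ v ∈ Finset.univ.filter (· ∈ T), condK G X P v x := by
  have hnn : ∀ z ∈ (Finset.univ : Finset (Config X)),
      (0:ℝ) ≤ (if ∀ v, v ∉ T → z v = x v then
        (∏ v ∈ Finset.univ.filter (· ∈ T), condK G X P v z) - margOn X P T z else 0) := by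
    intro z _
    split
    · exact sub_nonneg.mpr (aux_margOn_le_prod G X P hG h0 hM T hT z)
    · exact le_rfl
  have hsum : (∑ z : Config X, if ∀ v, v ∉ T → z v = x v then
      (∏ v ∈ Finset.univ.filter (· ∈ T), condK G X P v z) - margOn X P T z else 0) ≤ 0 := by
    have hsplit : (∑ z : Config X, if ∀ v, v ∉ T → z v = x v then
        (∏ v ∈ Finset.univ.filter (· ∈ T), condK G X P v z) - margOn X P T z else 0)
      = (∑ z : Config X, if ∀ v, v ∉ T → z v = x v then
          ∏ v ∈ Finset.univ.filter (· ∈ T), condK G X P v z else 0)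
        - ∑ z : Config X, if ∀ v, v ∉ T → z v = x v then margOn X P T z else 0 := by
      rw [← Finset.sum_sub_distrib]
      refine Finset.sum_congr rfl fun z _ => ?_
      by_cases h : ∀ v, v ∉ T → z v = x v
      · rw [if_pos h, if_pos h, if_pos h]
      · rw [if_neg h, if_neg h, if_neg h]; ring
    rw [hsplit, aux_psi_eq_one X P h1 T x]
    have hphi : (∑ z : Config X, if ∀ v, v ∉ T → z v = x v then
        ∏ v ∈ Finset.univ.filter (· ∈ T), condK G X P v z else 0) ≤ 1 := by
      have hcond : ∀ z : Config X,
          (∀ v, v ∉ T → z v = x v) ↔ (∀ v, v ∉ Finset.univ.filter (· ∈ T) → z v = x v) := by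
        intro z
        constructor
        · intro h v hv
          exact h v (by simpa using hv)
        · intro h v hv
          exact h v (by simpa using hv)
      rw [Finset.sum_congr rfl fun z _ => if_congr (hcond z) rfl rfl]
      exact aux_phi_le_one G X P hG h0 _ _ rfl x
    linarith
  have hzero := le_antisymm hsum (Finset.sum_nonneg hnn)
  have := (Finset.sum_eq_zero_iff_of_nonneg hnn).mp hzero x (Finset.mem_univ x)
  rw [if_pos (fun v _ => rfl)] at this
  linarith [this]


lemma aux_prod_filter_insert (f : V → ℝ) (A : V) (S : Set V) (hA : A ∉ S) :
    (∏ v ∈ Finset.univ.filter (· ∈ insert A S), f v)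
      = f A * ∏ v ∈ Finset.univ.filter (· ∈ S), f v := by
  rw [show Finset.univ.filter (· ∈ insert A S) = insert A (Finset.univ.filter (· ∈ S)) by
      ext u; simp [Set.mem_insert_iff]]
  exact Finset.prod_insert (by simp [hA])

end Aux

end Causal

open Causal in
/-- Positivity propagates from the parents of `A` to any set `L` of
non-descendants of `A` : if `P(X_A = a | X_{Pa(A)}) > ε` on every positive-probability
parent configuration, then `P(X_A = a | X_L) > ε` on every positive-probability
`L`-configuration. -/
theorem statement_19 {V : Type} [Fintype V] [DecidableEq V]
    (G : Causal.Digraph V) (hG : G.Acyclic) (A : V)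
    (X : V → Finset ℝ) (hX : ∀ v, 2 ≤ (X v).card)
    (P : Config X → ℝ) (hP : IsPMF X P) (hM : MarkovPMF G X P)
    (a : ℝ) (ha : a ∈ X A) (ε : ℝ) (hε : 0 < ε)
    (hpa : ∀ x : Config X, 0 < margOn X P (G.paSet A) x →
      ε < condProbEvent X P A a (G.paSet A) x) :
    ∀ L : Set V, (∀ v ∈ L, ¬ G.anc A v) →
      ∀ x : Config X, 0 < margOn X P L x → ε < condProbEvent X P A a L x := by
  intro L hL x hx
  have h0 := hP.1
  have h1 := hP.2
  obtain ⟨N, hNdef⟩ : ∃ N : Set V, N = {v | ¬ G.anc A v} := ⟨_, rfl⟩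
  have hmemN : ∀ v, v ∈ N ↔ ¬ G.anc A v := fun v => by rw [hNdef]; exact Iff.rfl
  have hAN : A ∉ N := fun h => (hmemN A).mp h Relation.ReflTransGen.refl
  have hpaN : G.paSet A ⊆ N := fun u hu => (hmemN u).mpr
    fun hanc => hG A (Relation.TransGen.tail' hanc hu)
  have hNanc : ∀ v ∈ N, G.paSet v ⊆ N := fun v hv u hu => (hmemN u).mpr
    fun hanc => (hmemN v).mp hv (Relation.ReflTransGen.tail hanc hu)
  have hLN : L ⊆ N := fun v hv => (hmemN v).mpr (hL v hv)
  obtain ⟨T, hTdef⟩ : ∃ T : Set V, T = insert A N := ⟨_, rfl⟩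
  have hmemT : ∀ v, v ∈ T ↔ (v = A ∨ v ∈ N) := fun v => by
    rw [hTdef]; exact Set.mem_insert_iff
  have hAT : A ∈ T := (hmemT A).mpr (Or.inl rfl)
  have hNT : N ⊆ T := fun v hv => (hmemT v).mpr (Or.inr hv)
  have hTanc : ∀ v ∈ T, G.paSet v ⊆ T := by
    intro v hv
    rcases (hmemT v).mp hv with rfl | hv
    · exact fun u hu => hNT (hpaN hu)
    · exact fun u hu => hNT (hNanc v hv hu)
  have hApa : A ∉ G.paSet A := aux_notMem_pa_self G hG A
  have hfilT : Finset.univ.filter (· ∈ T) = insert A (Finset.univ.filter (· ∈ N)) := by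
    ext u
    simp only [Finset.mem_filter, Finset.mem_insert, Finset.mem_univ, true_and, hmemT u]
  have hAfilN : A ∉ Finset.univ.filter (· ∈ N) := by
    simp only [Finset.mem_filter, Finset.mem_univ, true_and]
    exact hAN
  have hfacT : ∀ z, margOn X P T z = condK G X P A z * margOn X P N z := by
    intro z
    rw [aux_margOn_eq_prod G X P hG h0 h1 hM T hTanc z, hfilT, Finset.prod_insert hAfilN,
      ← aux_margOn_eq_prod G X P hG h0 h1 hM N hNanc z]
  set aRep : {r : ℝ // r ∈ X A} := ⟨a, ha⟩ with haRep
  have hne_T : ∀ v, v ∉ T → v ≠ A := fun v hv h => hv (h.symm ▸ hAT)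
  have hne_L : ∀ v ∈ L, v ≠ A := fun v hv h => hAN (hLN (h ▸ hv))
  have hne_N : ∀ v ∈ N, v ≠ A := fun v hv h => hAN (h ▸ hv)
  have hne_pa : ∀ v ∈ G.paSet A, v ≠ A := fun v hv h => hApa (h ▸ hv)
  have hupdN : ∀ (z : Config X) (b : {r : ℝ // r ∈ X A}),
      margOn X P N (Function.update z A b) = margOn X P N z :=
    fun z b => aux_margOn_congr X P fun u hu => Function.update_of_ne (hne_N u hu) _ _
  have hupdPa : ∀ (z : Config X) (b : {r : ℝ // r ∈ X A}),
      margOn X P (G.paSet A) (Function.update z A b) = margOn X P (G.paSet A) z :=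
    fun z b => aux_margOn_congr X P fun u hu => Function.update_of_ne (hne_pa u hu) _ _
  have hpinupd : ∀ (z : Config X) (b : {r : ℝ // r ∈ X A}),
      (∀ v, v ∉ T → z v = x v) → (∀ v, v ∉ T → Function.update z A b v = x v) :=
    fun z b h v hv => by rw [Function.update_of_ne (hne_T v hv)]; exact h v hv
  have hpinupd' : ∀ (z : Config X) (b : {r : ℝ // r ∈ X A}),
      (∀ v, v ∉ T → Function.update z A b v = x v) → (∀ v, v ∉ T → z v = x v) :=
    fun z b h v hv => by rw [← h v hv, Function.update_of_ne (hne_T v hv)]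
  have hLupd : ∀ (z : Config X) (b : {r : ℝ // r ∈ X A}),
      (∀ v ∈ L, z v = x v) → (∀ v ∈ L, Function.update z A b v = x v) :=
    fun z b h v hv => by rw [Function.update_of_ne (hne_L v hv)]; exact h v hv
  have hLupd' : ∀ (z : Config X) (b : {r : ℝ // r ∈ X A}),
      (∀ v ∈ L, Function.update z A b v = x v) → (∀ v ∈ L, z v = x v) :=
    fun z b h v hv => by rw [← h v hv, Function.update_of_ne (hne_L v hv)]
  -- the key pointwise bound from the hypothesis on parent configurations
  have hkey : ∀ z : Config X, 0 < margOn X P N z →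
      ε < condK G X P A (Function.update z A aRep) := by
    intro z hm
    have hpaz : 0 < margOn X P (G.paSet A) z :=
      lt_of_lt_of_le hm (aux_margOn_mono X P h0 hpaN z)
    have h2 := hpa z hpaz
    have heq : condProbEvent X P A a (G.paSet A) z
        = condK G X P A (Function.update z A aRep) := by
      unfold condProbEvent condK
      rw [hupdPa z aRep]
      congr 1
      unfold margOn
      refine Finset.sum_congr rfl fun y _ => ?_
      by_cases hc : (y A : ℝ) = a ∧ ∀ v ∈ G.paSet A, y v = z v
      · rw [if_pos hc, if_pos ?_]
        intro v hv
        rcases Set.mem_insert_iff.mp hv with rfl | hv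
        · rw [Function.update_self]; exact Subtype.ext hc.1
        · rw [Function.update_of_ne (hne_pa v hv)]; exact hc.2 v hv
      · rw [if_neg hc, if_neg ?_]
        intro hall
        refine hc ⟨?_, fun v hv => ?_⟩
        · have := hall A (Set.mem_insert _ _)
          rw [Function.update_self] at this
          exact congrArg Subtype.val this
        · have := hall v (Set.mem_insert_of_mem _ hv)
          rwa [Function.update_of_ne (hne_pa v hv)] at this
    rw [heq] at h2
    exact h2
  have hQL : ∀ y z : Config X, (∀ v ∈ T, y v = z v) →
      ((∀ v ∈ L, y v = x v) ↔ (∀ v ∈ L, z v = x v)) :=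
    fun y z h => forall₂_congr fun v hv => by rw [h v (hNT (hLN hv))]
  have hQAL : ∀ y z : Config X, (∀ v ∈ T, y v = z v) →
      (((y A : ℝ) = a ∧ ∀ v ∈ L, y v = x v) ↔ ((z A : ℝ) = a ∧ ∀ v ∈ L, z v = x v)) := by
    intro y z h
    refine and_congr ?_ (hQL y z h)
    rw [h A hAT]
  -- reduction of the denominator
  have hDen : margOn X P L x = ∑ z : Config X,
      if (z A = x A ∧ ((∀ v, v ∉ T → z v = x v) ∧ ∀ v ∈ L, z v = x v)) then
        ((if 0 < margOn X P (G.paSet A) z then (1:ℝ) else 0) * margOn X P N z) else 0 := by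
    refine Eq.trans (Eq.trans ?_ (aux_sum_event X P T (fun y => ∀ v ∈ L, y v = x v) hQL x)) ?_
    · unfold margOn
      refine Finset.sum_congr rfl fun y _ => ?_
      by_cases h : ∀ v ∈ L, y v = x v
      · rw [if_pos h, if_pos h]
      · rw [if_neg h, if_neg h]
    · refine Eq.trans (aux_sum_fiber X A (x A) _) ?_
      refine Finset.sum_congr rfl fun z _ => ?_
      by_cases hzA : z A = x A
      · rw [if_pos hzA]
        by_cases hD : (∀ v, v ∉ T → z v = x v) ∧ ∀ v ∈ L, z v = x v
        · rw [if_pos (And.intro hzA hD)]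
          trans (∑ b : {r : ℝ // r ∈ X A}, condK G X P A (Function.update z A b) * margOn X P N z)
          · refine Finset.sum_congr rfl fun b _ => ?_
            rw [if_pos (And.intro (hpinupd z b hD.1) (hLupd z b hD.2)), hfacT, hupdN z b]
          · rw [← Finset.sum_mul, aux_sum_condK G X P hG h0 A z]
        · rw [if_neg fun hc : _ ∧ _ => hD hc.2]
          refine Finset.sum_eq_zero fun b _ => ?_
          rw [if_neg fun hc => hD (And.intro (hpinupd' z b hc.1) (hLupd' z b hc.2))]
      · rw [if_neg hzA, if_neg fun hc => hzA hc.1]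
  -- reduction of the numerator
  have hNum : (∑ y : Config X, if ((y A : ℝ) = a ∧ ∀ v ∈ L, y v = x v) then P y else 0)
      = ∑ z : Config X,
      if (z A = x A ∧ ((∀ v, v ∉ T → z v = x v) ∧ ∀ v ∈ L, z v = x v)) then
        (condK G X P A (Function.update z A aRep) * margOn X P N z) else 0 := by
    refine Eq.trans (Eq.trans ?_
      (aux_sum_event X P T (fun y => (y A : ℝ) = a ∧ ∀ v ∈ L, y v = x v) hQAL x)) ?_
    · refine Finset.sum_congr rfl fun y _ => ?_
      by_cases h : (y A : ℝ) = a ∧ ∀ v ∈ L, y v = x v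
      · rw [if_pos h, if_pos h]
      · rw [if_neg h, if_neg h]
    · refine Eq.trans (aux_sum_fiber X A (x A) _) ?_
      refine Finset.sum_congr rfl fun z _ => ?_
      by_cases hzA : z A = x A
      · rw [if_pos hzA]
        by_cases hD : (∀ v, v ∉ T → z v = x v) ∧ ∀ v ∈ L, z v = x v
        · rw [if_pos (And.intro hzA hD)]
          trans (∑ b : {r : ℝ // r ∈ X A},
            if b = aRep then condK G X P A (Function.update z A b) * margOn X P N z else 0)
          · refine Finset.sum_congr rfl fun b _ => ?_
            by_cases hb : b = aRep
            · rw [if_pos hb,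
                if_pos (And.intro (hpinupd z b hD.1) (And.intro
                  (by rw [Function.update_self, hb]) (hLupd z b hD.2))),
                hfacT, hupdN z b]
            · rw [if_neg hb, if_neg fun hc => hb (Subtype.ext (by
                have := hc.2.1
                rwa [Function.update_self] at this))]
          · rw [Finset.sum_ite_eq' Finset.univ aRep
              (fun b => condK G X P A (Function.update z A b) * margOn X P N z),
              if_pos (Finset.mem_univ _)]
        · rw [if_neg fun hc : _ ∧ _ => hD hc.2]
          refine Finset.sum_eq_zero fun b _ => ?_
          rw [if_neg fun hc => hD (And.intro (hpinupd' z b hc.1) (hLupd' z b hc.2.2))]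
      · rw [if_neg hzA, if_neg fun hc => hzA hc.1]
  -- final comparison
  unfold condProbEvent
  rw [lt_div_iff₀ hx, hNum]
  conv_lhs => rw [hDen]
  rw [Finset.mul_sum]
  refine Finset.sum_lt_sum ?_ ?_
  · intro z _
    by_cases hc : z A = x A ∧ ((∀ v, v ∉ T → z v = x v) ∧ ∀ v ∈ L, z v = x v)
    · rw [if_pos hc, if_pos hc]
      by_cases hm : 0 < margOn X P N z
      · rw [if_pos (lt_of_lt_of_le hm (aux_margOn_mono X P h0 hpaN z)), one_mul]
        exact le_of_lt (mul_lt_mul_of_pos_right (hkey z hm) hm)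
      · have hm0 : margOn X P N z = 0 :=
          le_antisymm (not_lt.mp hm) (aux_margOn_nonneg X P h0 _ _)
        rw [hm0, mul_zero, mul_zero, mul_zero]
    · rw [if_neg hc, if_neg hc, mul_zero]
  · have hx' : (0:ℝ) < ∑ z : Config X,
        if (z A = x A ∧ ((∀ v, v ∉ T → z v = x v) ∧ ∀ v ∈ L, z v = x v)) then
          ((if 0 < margOn X P (G.paSet A) z then (1:ℝ) else 0) * margOn X P N z) else 0 := by
      rw [← hDen]; exact hx
    obtain ⟨z0, hz0mem, hz0⟩ := Finset.exists_lt_of_sum_lt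
      (f := fun _ : Config X => (0:ℝ))
      (g := fun z : Config X =>
        if (z A = x A ∧ ((∀ v, v ∉ T → z v = x v) ∧ ∀ v ∈ L, z v = x v)) then
          ((if 0 < margOn X P (G.paSet A) z then (1:ℝ) else 0) * margOn X P N z) else 0)
      (by rw [Finset.sum_const_zero]; exact hx')
    refine ⟨z0, hz0mem, ?_⟩
    have hc : z0 A = x A ∧ ((∀ v, v ∉ T → z0 v = x v) ∧ ∀ v ∈ L, z0 v = x v) := by
      by_contra hcn
      rw [if_neg hcn] at hz0
      exact lt_irrefl _ hz0
    rw [if_pos hc] at hz0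
    rw [if_pos hc, if_pos hc]
    have hm : 0 < margOn X P N z0 := by
      rcases mul_pos_iff.mp hz0 with ⟨-, hm⟩ | ⟨-, hm⟩
      · exact hm
      · exact absurd (aux_margOn_nonneg X P h0 N z0) (not_le.mpr hm)
    rw [if_pos (lt_of_lt_of_le hm (aux_margOn_mono X P h0 hpaN z0)), one_mul]
    exact mul_lt_mul_of_pos_right (hkey z0 hm) hm
end
end
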